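/- There exists an absolute constant C > 0 such that the following holds. Let A' ⊂ ℤ\{0} be a finite symmetric set and let L > 0 satisfy 1̂_{A'}(x) + L ≥ 0 for all x ∈ 𝕋. Let t ∈ ℤ\{0}, and set A'_t := A' ∩ (A'+t), B'_t := A'_t \ (−A'_t), and C'_t := (A'+t) \ (A' ∪ (A'−t)). Then ‖1̂_{B'_t} − 1̂_{−B'_t}‖₁ ≤ C·L² and ‖1̂_{C'_t} − 1̂_{−C'_t}‖₁ ≤ C·L². -/

import Mathlib

/-- `e(x) = e^{2πix}`. -/
noncomputable def eC (x : ℝ) : ℂ := Complex.exp (2 * Real.pi * Complex.I * x)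

/-- `1̂_A(x) = ∑_{a ∈ A} e(ax)`. -/
noncomputable def fhat (A : Finset ℤ) (x : ℝ) : ℂ := ∑ a ∈ A, eC ((a : ℝ) * x)

/-- The translate `A + t`. -/
def shiftS (A : Finset ℤ) (t : ℤ) : Finset ℤ := A.image (· + t)

/-- The reflection `-A`. -/
def negS (A : Finset ℤ) : Finset ℤ := A.image (fun a => -a)

/-- `B'_t = (A' ∩ (A'+t)) \ (-(A' ∩ (A'+t)))`. -/
def Bt (A' : Finset ℤ) (t : ℤ) : Finset ℤ :=
  (A' ∩ shiftS A' t) \ negS (A' ∩ shiftS A' t)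

/-- `C'_t = (A'+t) \ (A' ∪ (A'−t))`. -/
def Ct (A' : Finset ℤ) (t : ℤ) : Finset ℤ := shiftS A' t \ (A' ∪ shiftS A' (-t))

/-!
For symmetric `A` the sum `1̂_A` is real, and it has mean zero because `0 ∉ A`; hence
`|1̂_A| ≤ 1̂_A + 2L` integrates to `‖1̂_A‖₁ ≤ 2L`. If `A ≠ ∅`, some Fourier coefficient of `1̂_A`
equals `1`, so also `1 ≤ ‖1̂_A‖₁`, and thus `‖1̂_A‖₁ ≤ ‖1̂_A‖₁²` in all cases.

The key identity is `1̂_A ∗ 1̂_B = 1̂_{A ∩ B}` (convolution on `𝕋`). With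
`1̂_{A ± t} = e(±t·) 1̂_A` it gives
`1̂_{A ∩ (A+t)} − 1̂_{A ∩ (A−t)} = 1̂_A ∗ ((e(t·) − e(−t·)) 1̂_A)`,
whose `L¹` norm is at most `2‖1̂_A‖₁²` by Young's inequality. For symmetric `A` we have
`−(A ∩ (A+t)) = A ∩ (A−t)`, so the difference for `B'_t` is exactly this one, and the
difference for `C'_t` is `(e(t·) − e(−t·)) 1̂_A` minus this one.
-/

open MeasureTheory intervalIntegral Finset Function

theorem integral_norm_conv_le {f g : ℝ → ℂ} {T : ℝ} (hT : 0 ≤ T) (hf : Continuous f)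
    (hg : Continuous g) (hgT : Periodic g T) :
    ∫ x in 0..T, ‖∫ y in 0..T, f y * g (x - y)‖ ≤
      (∫ x in 0..T, ‖f x‖) * ∫ x in 0..T, ‖g x‖ := by
  have hF : Continuous (uncurry fun x y => ‖f y‖ * ‖g (x - y)‖) := by fun_prop
  calc ∫ x in 0..T, ‖∫ y in 0..T, f y * g (x - y)‖
      ≤ ∫ x in 0..T, ∫ y in 0..T, ‖f y‖ * ‖g (x - y)‖ := by
        refine integral_mono_on hT ?_ ?_ fun x _ => ?_
        · have : Continuous (uncurry fun x y => f y * g (x - y)) := by fun_prop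
          exact (continuous_parametric_intervalIntegral_of_continuous' this 0 T).norm
            |>.intervalIntegrable _ _
        · exact (continuous_parametric_intervalIntegral_of_continuous' hF 0 T).intervalIntegrable
            _ _
        · simpa only [norm_mul] using
            norm_integral_le_integral_norm (f := fun y => f y * g (x - y)) hT
    _ = ∫ y in 0..T, ∫ x in 0..T, ‖f y‖ * ‖g (x - y)‖ :=
        intervalIntegral_intervalIntegral_swap <|
          (hF.continuousOn.integrableOn_compact (isCompact_uIcc.prod isCompact_uIcc)).mono_set
            (Set.prod_mono Set.uIoc_subset_uIcc Set.uIoc_subset_uIcc)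
    _ = ∫ y in 0..T, ‖f y‖ * ∫ x in 0..T, ‖g x‖ := by
        refine integral_congr fun y _ => ?_
        have := (hgT.comp norm).intervalIntegral_add_eq (0 - y) 0
        simp only [comp_def, zero_add] at this
        rw [intervalIntegral.integral_const_mul, integral_comp_sub_right (fun x => ‖g x‖), ← this]
        ring_nf
    _ = _ := integral_mul_const _ _

theorem eC_add (x y : ℝ) : eC (x + y) = eC x * eC y := by
  simp only [eC, ← Complex.exp_add]
  push_cast
  ring_nf

theorem norm_eC (x : ℝ) : ‖eC x‖ = 1 := by
  simp [eC, Complex.norm_exp]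

@[fun_prop]
theorem continuous_eC : Continuous eC := by
  unfold eC
  fun_prop

theorem eC_intCast (n : ℤ) : eC n = 1 := by
  simpa [eC, mul_comm] using Complex.exp_int_mul_two_pi_mul_I n

theorem conj_eC (x : ℝ) : starRingEnd ℂ (eC x) = eC (-x) := by
  simp only [eC, ← Complex.exp_conj, map_mul, Complex.conj_I, Complex.conj_ofReal, map_ofNat]
  push_cast
  ring_nf

theorem integral_eC_intCast_mul (n : ℤ) :
    ∫ x in (0 : ℝ)..1, eC (n * x) = if n = 0 then 1 else 0 := by
  split_ifs with hn
  · simp [hn, eC]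
  · have hc : 2 * Real.pi * Complex.I * n ≠ 0 := by simp [Real.pi_ne_zero, hn]
    simp only [eC, Complex.ofReal_mul, Complex.ofReal_intCast, ← mul_assoc]
    have h1 : Complex.exp (2 * Real.pi * Complex.I * n) = 1 := by
      simpa [eC] using eC_intCast n
    simp [integral_exp_mul_complex hc, h1]

theorem norm_eC_sub_eC_le (x y : ℝ) : ‖eC x - eC y‖ ≤ 2 := by
  simpa only [norm_eC, one_add_one_eq_two] using norm_sub_le (eC x) (eC y)

@[fun_prop]
theorem continuous_fhat (A : Finset ℤ) : Continuous (fhat A) := by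
  unfold fhat
  fun_prop

theorem fhat_periodic (A : Finset ℤ) : Periodic (fhat A) 1 := fun x => by
  simp only [fhat, mul_add, mul_one, eC_add, eC_intCast]

theorem integral_fhat_mul_eC_neg (A : Finset ℤ) (n : ℤ) :
    ∫ x in (0 : ℝ)..1, fhat A x * eC (-n * x) = if n ∈ A then 1 else 0 := by
  have hexp : ∀ x : ℝ, fhat A x * eC (-n * x) = ∑ a ∈ A, eC ((a - n : ℤ) * x) := fun x => by
    simp only [fhat, sum_mul, ← eC_add]
    refine sum_congr rfl fun a _ => ?_
    push_cast
    ring_nf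
  simp_rw [hexp]
  rw [intervalIntegral.integral_finsetSum fun a _ =>
    Continuous.intervalIntegrable (by fun_prop) _ _]
  simp_rw [integral_eC_intCast_mul, sub_eq_zero]
  exact sum_ite_eq' A n _

theorem integral_fhat_mul_fhat_sub (A B : Finset ℤ) (x : ℝ) :
    ∫ y in (0 : ℝ)..1, fhat A y * fhat B (x - y) = fhat (A ∩ B) x := by
  have hexp : ∀ y : ℝ, fhat A y * fhat B (x - y) =
      ∑ b ∈ B, eC (b * x) * (fhat A y * eC (-b * y)) := fun y => by
    have : fhat B (x - y) = ∑ b ∈ B, eC (b * x) * eC (-b * y) := by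
      refine sum_congr rfl fun b _ => ?_
      rw [← eC_add]
      ring_nf
    rw [this, mul_sum]
    exact sum_congr rfl fun b _ => by ring
  simp_rw [hexp]
  rw [intervalIntegral.integral_finsetSum fun b _ =>
    Continuous.intervalIntegrable (by fun_prop) _ _]
  simp_rw [intervalIntegral.integral_const_mul, integral_fhat_mul_eC_neg, mul_ite, mul_one,
    mul_zero]
  rw [← sum_filter, filter_mem_eq_inter, inter_comm, fhat]

@[simp]
theorem mem_shiftS {A : Finset ℤ} {t n : ℤ} : n ∈ shiftS A t ↔ n - t ∈ A := by
  simp [shiftS, sub_eq_add_neg]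

@[simp]
theorem mem_negS {A : Finset ℤ} {n : ℤ} : n ∈ negS A ↔ -n ∈ A := by
  simp [negS, neg_eq_iff_eq_neg]

theorem negS_eq_self {A : Finset ℤ} (hsym : ∀ a : ℤ, a ∈ A ↔ -a ∈ A) : negS A = A := by
  ext n
  rw [mem_negS, hsym, neg_neg]

theorem fhat_shiftS (A : Finset ℤ) (t : ℤ) (x : ℝ) :
    fhat (shiftS A t) x = eC (t * x) * fhat A x := by
  rw [fhat, shiftS, sum_image fun a _ b _ h => add_right_cancel h, fhat, mul_sum]
  refine sum_congr rfl fun a _ => ?_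
  rw [← eC_add]
  push_cast
  ring_nf

theorem fhat_negS (A : Finset ℤ) (x : ℝ) : fhat (negS A) x = starRingEnd ℂ (fhat A x) := by
  rw [fhat, negS, sum_image fun a _ b _ h => neg_injective h, fhat, map_sum]
  refine sum_congr rfl fun a _ => ?_
  rw [conj_eC]
  push_cast
  ring_nf

theorem norm_fhat_eq_abs_re {A : Finset ℤ} (hsym : ∀ a : ℤ, a ∈ A ↔ -a ∈ A) (x : ℝ) :
    ‖fhat A x‖ = |(fhat A x).re| := by
  have hreal : ((fhat A x).re : ℂ) = fhat A x := by
    rw [← Complex.conj_eq_iff_re, ← fhat_negS, negS_eq_self hsym]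
  rw [← hreal, Complex.norm_real, Real.norm_eq_abs, Complex.ofReal_re]

theorem integral_fhat {A : Finset ℤ} (h0 : (0 : ℤ) ∉ A) : ∫ x in (0 : ℝ)..1, fhat A x = 0 := by
  simpa [eC, h0] using integral_fhat_mul_eC_neg A 0

theorem integral_norm_fhat_le {A : Finset ℤ} (h0 : (0 : ℤ) ∉ A)
    (hsym : ∀ a : ℤ, a ∈ A ↔ -a ∈ A) {L : ℝ} (hL0 : 0 ≤ L)
    (hL : ∀ x : ℝ, 0 ≤ (fhat A x).re + L) :
    ∫ x in (0 : ℝ)..1, ‖fhat A x‖ ≤ 2 * L := by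
  have hre : ∫ x in (0 : ℝ)..1, (fhat A x).re = 0 := by
    simpa [integral_fhat h0] using
      intervalIntegral_re ((continuous_fhat A).intervalIntegrable (μ := volume) 0 1)
  calc ∫ x in (0 : ℝ)..1, ‖fhat A x‖ ≤ ∫ x in (0 : ℝ)..1, ((fhat A x).re + 2 * L) := by
        refine integral_mono_on zero_le_one (Continuous.intervalIntegrable (by fun_prop) _ _)
          (Continuous.intervalIntegrable (by fun_prop) _ _) fun x _ => ?_
        rw [norm_fhat_eq_abs_re hsym]
        exact abs_le.2 ⟨by linarith [hL x], by linarith [hL x]⟩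
    _ = 2 * L := by
        rw [integral_add (Continuous.intervalIntegrable (by fun_prop) _ _) intervalIntegrable_const,
          hre]
        simp

theorem one_le_integral_norm_fhat {A : Finset ℤ} (hA : A.Nonempty) :
    1 ≤ ∫ x in (0 : ℝ)..1, ‖fhat A x‖ := by
  obtain ⟨a, ha⟩ := hA
  have hcoeff := integral_fhat_mul_eC_neg A a
  rw [if_pos ha] at hcoeff
  calc (1 : ℝ) = ‖∫ x in (0 : ℝ)..1, fhat A x * eC (-a * x)‖ := by rw [hcoeff, norm_one]
    _ ≤ ∫ x in (0 : ℝ)..1, ‖fhat A x * eC (-a * x)‖ := norm_integral_le_integral_norm zero_le_one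
    _ = ∫ x in (0 : ℝ)..1, ‖fhat A x‖ := by simp only [norm_mul, norm_eC, mul_one]

theorem integral_norm_fhat_le_sq (A : Finset ℤ) :
    ∫ x in (0 : ℝ)..1, ‖fhat A x‖ ≤ (∫ x in (0 : ℝ)..1, ‖fhat A x‖) ^ 2 := by
  rcases A.eq_empty_or_nonempty with rfl | hA
  · simp [fhat]
  · nlinarith [one_le_integral_norm_fhat hA]

theorem norm_fhat_shiftS_sub_le (A : Finset ℤ) (t : ℤ) (x : ℝ) :
    ‖fhat (shiftS A t) x - fhat (shiftS A (-t)) x‖ ≤ 2 * ‖fhat A x‖ := by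
  rw [fhat_shiftS, fhat_shiftS, ← sub_mul, norm_mul]
  exact mul_le_mul_of_nonneg_right (norm_eC_sub_eC_le _ _) (norm_nonneg _)

theorem integral_norm_fhat_inter_shiftS_sub_le (A : Finset ℤ) (s : ℤ) :
    ∫ x in (0 : ℝ)..1, ‖fhat (A ∩ shiftS A s) x - fhat (A ∩ shiftS A (-s)) x‖ ≤
      2 * (∫ x in (0 : ℝ)..1, ‖fhat A x‖) ^ 2 := by
  set g : ℝ → ℂ := fun x => fhat (shiftS A s) x - fhat (shiftS A (-s)) x
  have hconv : ∀ x, fhat (A ∩ shiftS A s) x - fhat (A ∩ shiftS A (-s)) x =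
      ∫ y in (0 : ℝ)..1, fhat A y * g (x - y) := fun x => by
    simp only [g, mul_sub]
    rw [integral_sub (Continuous.intervalIntegrable (by fun_prop) _ _)
      (Continuous.intervalIntegrable (by fun_prop) _ _), integral_fhat_mul_fhat_sub,
      integral_fhat_mul_fhat_sub]
  have hg : ∫ x in (0 : ℝ)..1, ‖g x‖ ≤ 2 * ∫ x in (0 : ℝ)..1, ‖fhat A x‖ := by
    rw [← intervalIntegral.integral_const_mul]
    exact integral_mono_on zero_le_one (Continuous.intervalIntegrable (by fun_prop) _ _)
      (Continuous.intervalIntegrable (by fun_prop) _ _) fun x _ => norm_fhat_shiftS_sub_le A s x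
  have hI : 0 ≤ ∫ x in (0 : ℝ)..1, ‖fhat A x‖ :=
    integral_nonneg zero_le_one fun x _ => norm_nonneg _
  simp_rw [hconv]
  calc _ ≤ (∫ x in (0 : ℝ)..1, ‖fhat A x‖) * ∫ x in (0 : ℝ)..1, ‖g x‖ :=
        integral_norm_conv_le zero_le_one (by fun_prop) (by fun_prop)
          fun x => by simp only [g, fhat_periodic _ x]
    _ ≤ _ := by nlinarith

theorem fhat_sdiff (S T : Finset ℤ) (x : ℝ) : fhat (S \ T) x = fhat S x - fhat (S ∩ T) x := by
  rw [fhat, fhat, fhat, ← sdiff_inter_self_left S T]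
  exact sum_sdiff_eq_sub inter_subset_left

theorem fhat_union (S T : Finset ℤ) (x : ℝ) :
    fhat (S ∪ T) x = fhat S x + fhat T x - fhat (S ∩ T) x := by
  rw [fhat, fhat, fhat, fhat, ← sum_union_inter]
  ring

theorem fhat_sdiff_sub_fhat_sdiff (S T : Finset ℤ) (x : ℝ) :
    fhat (S \ T) x - fhat (T \ S) x = fhat S x - fhat T x := by
  rw [fhat_sdiff, fhat_sdiff, inter_comm T S]
  ring

theorem fhat_sdiff_union_sub_fhat_sdiff_union (A P Q : Finset ℤ) (x : ℝ) :
    fhat (P \ (A ∪ Q)) x - fhat (Q \ (A ∪ P)) x =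
      (fhat P x - fhat Q x) - (fhat (A ∩ P) x - fhat (A ∩ Q) x) := by
  simp only [fhat_sdiff, inter_union_distrib_left, fhat_union]
  rw [inter_comm P A, inter_comm Q A, inter_comm Q P,
    show A ∩ P ∩ (P ∩ Q) = A ∩ Q ∩ (P ∩ Q) by ext; simp only [mem_inter]; tauto]
  ring

section Symmetric

variable {A : Finset ℤ} (hsym : ∀ a : ℤ, a ∈ A ↔ -a ∈ A) (t : ℤ)
include hsym

theorem neg_mem_shiftS_iff (s n : ℤ) : -n ∈ shiftS A s ↔ n ∈ shiftS A (-s) := by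
  rw [mem_shiftS, mem_shiftS, hsym, show -(-n - s) = n - -s by ring]

theorem negS_inter_shiftS : negS (A ∩ shiftS A t) = A ∩ shiftS A (-t) := by
  ext n
  rw [mem_negS, mem_inter, mem_inter, neg_mem_shiftS_iff hsym, ← hsym]

theorem negS_Ct : negS (Ct A t) = shiftS A (-t) \ (A ∪ shiftS A t) := by
  ext n
  simp only [Ct, mem_negS, mem_sdiff, mem_union, neg_mem_shiftS_iff hsym, neg_neg, ← hsym]

theorem integral_norm_fhat_Bt_sub_le :
    ∫ x in (0 : ℝ)..1, ‖fhat (Bt A t) x - fhat (negS (Bt A t)) x‖ ≤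
      2 * (∫ x in (0 : ℝ)..1, ‖fhat A x‖) ^ 2 := by
  have hneg : negS (Bt A t) = negS (A ∩ shiftS A t) \ (A ∩ shiftS A t) := by
    ext n
    simp only [Bt, mem_negS, mem_sdiff, neg_neg]
  simp_rw [hneg, Bt, fhat_sdiff_sub_fhat_sdiff, negS_inter_shiftS hsym]
  exact integral_norm_fhat_inter_shiftS_sub_le A t

theorem integral_norm_fhat_Ct_sub_le :
    ∫ x in (0 : ℝ)..1, ‖fhat (Ct A t) x - fhat (negS (Ct A t)) x‖ ≤
      2 * (∫ x in (0 : ℝ)..1, ‖fhat A x‖) + 2 * (∫ x in (0 : ℝ)..1, ‖fhat A x‖) ^ 2 := by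
  set D : ℝ → ℂ := fun x => fhat (A ∩ shiftS A t) x - fhat (A ∩ shiftS A (-t)) x
  have hpt : ∀ x, ‖fhat (Ct A t) x - fhat (negS (Ct A t)) x‖ ≤ 2 * ‖fhat A x‖ + ‖D x‖ :=
    fun x => by
      rw [negS_Ct hsym, Ct, fhat_sdiff_union_sub_fhat_sdiff_union]
      exact (norm_sub_le _ _).trans (add_le_add_left (norm_fhat_shiftS_sub_le A t x) _)
  calc _ ≤ ∫ x in (0 : ℝ)..1, (2 * ‖fhat A x‖ + ‖D x‖) :=
        integral_mono_on zero_le_one (Continuous.intervalIntegrable (by fun_prop) _ _)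
          (Continuous.intervalIntegrable (by fun_prop) _ _) fun x _ => hpt x
    _ = 2 * (∫ x in (0 : ℝ)..1, ‖fhat A x‖) + ∫ x in (0 : ℝ)..1, ‖D x‖ := by
        rw [integral_add (Continuous.intervalIntegrable (by fun_prop) _ _)
          (Continuous.intervalIntegrable (by fun_prop) _ _), intervalIntegral.integral_const_mul]
    _ ≤ _ := add_le_add le_rfl (integral_norm_fhat_inter_shiftS_sub_le A t)

end Symmetric

/-- Improved `L¹`-bounds: `‖1̂_{B'_t} − 1̂_{−B'_t}‖₁ ≪ L²` and
`‖1̂_{C'_t} − 1̂_{−C'_t}‖₁ ≪ L²`. -/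
theorem l1_bounds_differences :
    ∃ C : ℝ, 0 < C ∧
      ∀ A' : Finset ℤ, (0 : ℤ) ∉ A' → (∀ a : ℤ, a ∈ A' ↔ -a ∈ A') →
        ∀ L : ℝ, 0 < L → (∀ x : ℝ, 0 ≤ (fhat A' x).re + L) →
          ∀ t : ℤ, t ≠ 0 →
            (∫ x in (0:ℝ)..1,
                ‖fhat (Bt A' t) x - fhat (negS (Bt A' t)) x‖) ≤ C * L ^ 2 ∧
            (∫ x in (0:ℝ)..1,
                ‖fhat (Ct A' t) x - fhat (negS (Ct A' t)) x‖) ≤ C * L ^ 2 := by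
  refine ⟨16, by norm_num, fun A' h0 hsym L hL0 hL t _ => ?_⟩
  have hI0 : 0 ≤ ∫ x in (0 : ℝ)..1, ‖fhat A' x‖ :=
    integral_nonneg zero_le_one fun x _ => norm_nonneg _
  have hIL := integral_norm_fhat_le h0 hsym hL0.le hL
  have hIsq := integral_norm_fhat_le_sq A'
  exact ⟨(integral_norm_fhat_Bt_sub_le hsym t).trans (by nlinarith),
    (integral_norm_fhat_Ct_sub_le hsym t).trans (by nlinarith)⟩
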